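/- For every integer n ≥ 5 and every hub seed ψ ∈ Hub_n, the first son β = son(ψ, 1) (the seed β with σ(ψ^(1)) = β̃) is also a hub seed, and height(β) = height(ψ). -/

import Mathlib

/-- `σ`: cyclic left shift by one position. -/
def sig (l : List ℕ) : List ℕ := l.rotate 1

/-- `τ`: transposition of the first two entries. -/
def tau : List ℕ → List ℕ
  | a :: b :: rest => b :: a :: rest
  | l => l

/-- Apply a word over the alphabet {σ,τ} (encoded: `false` = σ, `true` = τ)
letter by letter, from left to right. -/
def applyWord (w : List Bool) (l : List ℕ) : List ℕ :=
  w.foldl (fun p c => if c then tau p else sig p) l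

/-- `l` is an n-permutation: a sequence containing each of 1,…,n exactly once. -/
def IsPerm (n : ℕ) (l : List ℕ) : Prop := l.Perm (List.range' 1 n)

/-- The permutation (n, n−1, …, 1). -/
def descList (n : ℕ) : List ℕ := (List.range n).reverse.map (· + 1)

/-- Cyclic successor ⊕1 on {1,…,n−1}. -/
def osucc (n a : ℕ) : ℕ := if a = n - 1 then 1 else a + 1

/-- Cyclic predecessor ⊖1 on {1,…,n−1}. -/
def opred (n a : ℕ) : ℕ := if a = 1 then n - 1 else a - 1

/-- From a seed (a₁, a₂, …, a_{n−1}) form (a₁, a₂⊕1, a₂, …, a_{n−1}). -/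
def seedToPerm (n : ℕ) : List ℕ → List ℕ
  | a1 :: a2 :: rest => a1 :: osucc n a2 :: a2 :: rest
  | l => l

/-- ψ is a seed: an (n−1)-tuple of distinct elements of {1,…,n} with first entry n
such that (a₁, a₂⊕1, a₂, …, a_{n−1}) is an n-permutation. -/
def IsSeed (n : ℕ) (ψ : List ℕ) : Prop :=
  ψ.length = n - 1 ∧ ψ.head? = some n ∧ IsPerm n (seedToPerm n ψ)

/-- The missing element mis(ψ) = a₂⊕1. -/
def mis (n : ℕ) (ψ : List ℕ) : ℕ := osucc n (ψ.getD 1 0)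

/-- The package perms(ψ): all permutations obtained by inserting mis(ψ)
at any position of ψ and then taking any cyclic shift. -/
def perms (n : ℕ) (ψ : List ℕ) : Set (List ℕ) :=
  { π | ∃ i j, i ≤ ψ.length ∧ π = (ψ.insertIdx i (mis n ψ)).rotate j }

/-- cycle(π): the set of cyclic shifts of π. -/
def cycle (π : List ℕ) : Set (List ℕ) := { ρ | ∃ j, ρ = π.rotate j }

/-- ψ̃ = (a₁, mis(ψ), a₂, …, a_{n−1}). -/
def tildeSeed (n : ℕ) (ψ : List ℕ) : List ℕ :=
  match ψ with
  | a1 :: rest => a1 :: mis n ψ :: rest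
  | [] => []

/-- ψ^(i) (for 1 ≤ i ≤ n−1): the right cyclic shift of ψ by i−1 positions
with mis(ψ) prepended; for i = n−1 this is (x, a₂, …, a_{n−1}, a₁). -/
def seedShift (n : ℕ) (ψ : List ℕ) (i : ℕ) : List ℕ := mis n ψ :: ψ.rotate (n - i)

/-- Length of the maximal initial run a = b⊕1 in a list. -/
def decRun (n : ℕ) : List ℕ → ℕ
  | a :: b :: rest => if a = osucc n b then decRun n (b :: rest) + 1 else 1
  | [_] => 1
  | [] => 0

/-- height(ψ): the largest k with aᵢ = a_{i+1}⊕1 for all 2 ≤ i ≤ k. -/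
def height (n : ℕ) (ψ : List ℕ) : ℕ := decRun n ψ.tail

/-- The hub seed (n, b, b⊖1, …, b⊖(n−3)). -/
def hubSeed (n b : ℕ) : List ℕ := n :: (List.range (n - 2)).map (fun j => (opred n)^[j] b)

/-- Hubₙ: the set of hub seeds. -/
def Hub (n : ℕ) : Set (List ℕ) := { ψ | ∃ b, 1 ≤ b ∧ b ≤ n - 1 ∧ ψ = hubSeed n b }

/-- `IsParent n ψ β` means ψ = parent(β): ψ, β are neighboring distinct seeds,
height(ψ) > 1 and mis(ψ) = mis(β)⊕1. -/
def IsParent (n : ℕ) (par child : List ℕ) : Prop :=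
  IsSeed n par ∧ IsSeed n child ∧ par ≠ child ∧
  (perms n par ∩ perms n child).Nonempty ∧
  1 < height n par ∧ mis n par = osucc n (mis n child)

/-- `IsSon n β ψ i` means β = son(ψ, i), i.e. β is a seed with σ^i(ψ^(i)) = β̃. -/
def IsSon (n : ℕ) (child par : List ℕ) (i : ℕ) : Prop :=
  IsSeed n child ∧ sig^[i] (seedShift n par i) = tildeSeed n child

/-- γ_k = σ^k τ. -/
def gam (k : ℕ) : List Bool := List.replicate k false ++ [true]

/-- W_0 = σ and W_k = τ · ∏_{i=1}^{n−2} σ^i W_{Δ(k,i)} γ_{n−2−i},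
where Δ(k,i) = min(k−1, n−2−i). -/
def W (n : ℕ) : ℕ → List Bool
  | 0 => [false]
  | k + 1 => true :: ((List.range (n - 2)).map (fun j =>
      List.replicate (j + 1) false ++ W n (min k (n - 2 - (j + 1))) ++
        gam (n - 2 - (j + 1)))).flatten
  termination_by k => k
  decreasing_by omega

/-- V_n = γ_{n−3} · ∏_{i=2}^{n−3} σ^i W_{Δ(n−3,i)} γ_{n−2−i} · σ^{n−1}. -/
def V (n : ℕ) : List Bool :=
  gam (n - 3) ++
  ((List.range (n - 4)).map (fun j =>
    List.replicate (j + 2) false ++ W n (min (n - 4) (n - 2 - (j + 2))) ++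
      gam (n - 2 - (j + 2)))).flatten ++
  List.replicate (n - 1) false

/-- SEQ_n = γ₁^{n−2} σ² (V_n τ)^{n−2} V_n. -/
def SEQ (n : ℕ) : List Bool :=
  (List.replicate (n - 2) (gam 1)).flatten ++ List.replicate 2 false ++
  (List.replicate (n - 2) (V n ++ [true])).flatten ++ V n

/-- r: the first element after the value n in the left-to-right cyclic reading
of π with the entry p₂ skipped. -/
def rVal (n : ℕ) (π : List ℕ) : ℕ :=
  match π with
  | p1 :: _ :: rest =>
      let l := p1 :: rest
      l.getD ((l.idxOf n + 1) % l.length) 0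
  | _ => 0

/-- The Sawada–Williams successor function `next`. -/
def swNext (n : ℕ) (π : List ℕ) : List ℕ :=
  if π = descList n then sig π
  else if π.getD 1 0 ≠ n ∧ π.getD 1 0 = osucc n (rVal n π) then tau π else sig π

/-- GEN(π, α): all permutations visited (including π) when α is applied to π. -/
def GEN (α : List Bool) (π : List ℕ) : Set (List ℕ) :=
  { ρ | ∃ t, t ≤ α.length ∧ ρ = applyWord (α.take t) π }

/-- Tree(ψ): ψ together with all seeds from which ψ is reachable by parent links. -/
def SeedTree (n : ℕ) (ψ : List ℕ) : Set (List ℕ) :=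
  { β | Relation.ReflTransGen (fun x y => IsParent n y x) β ψ }

/-- bunch(ψ) = (⋃_{β ∈ Tree(ψ)} perms(β) ∖ cycle(ψ̃)) ∪ {ψ̃, ψ^(n−1)}. -/
def bunch (n : ℕ) (ψ : List ℕ) : Set (List ℕ) :=
  ((⋃ β ∈ SeedTree n ψ, perms n β) \ cycle (tildeSeed n ψ)) ∪
    {tildeSeed n ψ, seedShift n ψ (n - 1)}

/-- rank(π): the number of initial letters of SEQ_n needed to reach π from
π₀ = τ((n, n−1, …, 1)). -/
noncomputable def rank (n : ℕ) (π : List ℕ) : ℕ :=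
  sInf { t | applyWord ((SEQ n).take t) (tau (descList n)) = π }

/-- SUM(k,j) = |τ · ∏_{i=1}^{j−1} σ^i W_{Δ(k,i)} γ_{n−2−i}| + j. -/
def SUMw (n k j : ℕ) : ℕ :=
  (true :: ((List.range (j - 1)).map (fun m =>
    List.replicate (m + 1) false ++ W n (min (k - 1) (n - 2 - (m + 1))) ++
      gam (n - 2 - (m + 1)))).flatten).length + j

/-- ord(ψ): the position of the entry mis(ψ)⊕1 in ψ, counted from the right end. -/
def ord (n : ℕ) (ψ : List ℕ) : ℕ := ψ.length - ψ.idxOf (osucc n (mis n ψ))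

/-- Length of the continuation of the maximal decreasing subsequence starting
with current value `cur`. -/
def chainLen (n : ℕ) : List ℕ → ℕ → ℕ
  | [], _ => 0
  | b :: rest, cur => if cur = osucc n b then chainLen n rest b + 1 else chainLen n rest cur

/-- level(ψ) = n − m − 3, where m+1 is the length of dec_seq(ψ). -/
def level (n : ℕ) (ψ : List ℕ) : ℕ := n - chainLen n (ψ.drop 2) (ψ.getD 1 0) - 3

/-!
The hub seed with parameter `b` is `ψ = (n, b, b⊖1, …, b⊖(n−3))`, with `mis ψ = b⊕1`. Since `⊖`
is an `(n−1)`-cycle on `{1, …, n−1}`, `b⊖(n−2) = b⊕1`, so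
`σ(ψ^(1)) = ψ ++ [b⊕1] = (n, b, b⊖1, …, b⊖(n−2))`, which is `β̃` for the hub seed `β` with
parameter `b⊖1` (whose missing element is `b`). Both hub seeds are strictly cyclically decreasing
after the leading `n`, so both have height `n − 2`.
-/

lemma osucc_opred {n a : ℕ} (h1 : 1 ≤ a) (h2 : a ≤ n - 1) : osucc n (opred n a) = a := by
  unfold osucc opred; split_ifs <;> omega

lemma one_le_opred {n a : ℕ} (h1 : 1 ≤ a) (h2 : a ≤ n - 1) : 1 ≤ opred n a := by
  unfold opred; split_ifs <;> omega

lemma opred_le {n a : ℕ} (h : a ≤ n - 1) : opred n a ≤ n - 1 := by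
  unfold opred; split_ifs <;> omega

lemma opred_iterate_of_lt {n a j : ℕ} (h : j < a) : (opred n)^[j] a = a - j := by
  induction j with
  | zero => rfl
  | succ j ih =>
    rw [Function.iterate_succ_apply', ih (by omega), opred, if_neg (by omega)]
    omega

lemma opred_iterate_self {n a : ℕ} (h : 1 ≤ a) : (opred n)^[a] a = n - 1 := by
  obtain ⟨k, rfl⟩ : ∃ k, a = k + 1 := ⟨a - 1, by omega⟩
  rw [Function.iterate_succ_apply', opred_iterate_of_lt (by omega), opred, if_pos (by omega)]

lemma opred_iterate_sub_two {n b : ℕ} (h1 : 1 ≤ b) (h2 : b ≤ n - 1) :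
    (opred n)^[n - 2] b = osucc n b := by
  rw [osucc]
  split_ifs with hb
  · subst hb
    rw [opred_iterate_of_lt (by omega)]
    omega
  · rw [show n - 2 = (n - 2 - b) + b by omega, Function.iterate_add_apply,
      opred_iterate_self h1, opred_iterate_of_lt (by omega)]
    omega

lemma iterate_opred_append_osucc {n b : ℕ} (h1 : 1 ≤ b) (h2 : b ≤ n - 1) :
    List.iterate (opred n) b (n - 2) ++ [osucc n b]
      = b :: List.iterate (opred n) (opred n b) (n - 2) := by
  rw [show b :: List.iterate (opred n) (opred n b) (n - 2) = List.iterate (opred n) b (n - 2 + 1)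
    from rfl, List.iterate_add, opred_iterate_sub_two h1 h2]
  rfl

lemma decRun_iterate_opred {n : ℕ} :
    ∀ {a : ℕ} (m : ℕ), 1 ≤ a → a ≤ n - 1 → decRun n (List.iterate (opred n) a m) = m
  | _, 0, _, _ => rfl
  | _, 1, _, _ => rfl
  | a, m + 2, h1, h2 => by
    rw [List.iterate, List.iterate, decRun, if_pos (osucc_opred h1 h2).symm, ← List.iterate,
      decRun_iterate_opred (m + 1) (one_le_opred h1 h2) (opred_le h2)]

lemma hubSeed_eq (n b : ℕ) : hubSeed n b = n :: List.iterate (opred n) b (n - 2) := by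
  rw [hubSeed, List.range_map_iterate]

lemma height_hubSeed {n b : ℕ} (h1 : 1 ≤ b) (h2 : b ≤ n - 1) : height n (hubSeed n b) = n - 2 := by
  rw [height, hubSeed_eq, List.tail_cons, decRun_iterate_opred _ h1 h2]

lemma mis_hubSeed {n : ℕ} (hn : 3 ≤ n) (b : ℕ) : mis n (hubSeed n b) = osucc n b := by
  rw [mis, hubSeed_eq, show n - 2 = n - 3 + 1 by omega]
  rfl

lemma tildeSeed_hubSeed_opred {n b : ℕ} (hn : 3 ≤ n) (h1 : 1 ≤ b) (h2 : b ≤ n - 1) :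
    tildeSeed n (hubSeed n (opred n b)) = hubSeed n b ++ [osucc n b] := by
  calc tildeSeed n (hubSeed n (opred n b))
      = n :: mis n (hubSeed n (opred n b)) :: List.iterate (opred n) (opred n b) (n - 2) := by
        rw [hubSeed_eq]; rfl
    _ = hubSeed n b ++ [osucc n b] := by
        rw [mis_hubSeed hn, osucc_opred h1 h2, hubSeed_eq n b, List.cons_append,
          iterate_opred_append_osucc h1 h2]

lemma sig_seedShift_one {n : ℕ} {ψ : List ℕ} (h : ψ.length = n - 1) :
    sig (seedShift n ψ 1) = ψ ++ [mis n ψ] := by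
  rw [seedShift, ← h, List.rotate_length, sig, List.rotate_cons_succ, List.rotate_zero]

lemma tildeSeed_perm_append_mis (n : ℕ) {ψ : List ℕ} (h : ψ ≠ []) :
    (tildeSeed n ψ).Perm (ψ ++ [mis n ψ]) := by
  obtain ⟨a, rest, rfl⟩ := List.exists_cons_of_ne_nil h
  exact (List.Perm.swap _ _ _).trans (List.perm_append_singleton _ _).symm

lemma seedToPerm_eq_tildeSeed (n : ℕ) {ψ : List ℕ} (h : 2 ≤ ψ.length) :
    seedToPerm n ψ = tildeSeed n ψ := by
  match ψ, h with
  | _ :: _ :: _, _ => rfl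

lemma IsSeed.two_le_length {n : ℕ} {ψ : List ℕ} (hψ : IsSeed n ψ) : 2 ≤ ψ.length := by
  obtain ⟨hlen, hhead, hperm⟩ := hψ
  match ψ, hlen, hhead, hperm with
  | [], _, hhead, _ => simp at hhead
  | [_], hlen, _, hperm =>
    have := hperm.length_eq
    simp [seedToPerm] at hlen this
    omega
  | _ :: _ :: _, _, _, _ => simp

lemma IsSeed.of_tildeSeed_eq {n : ℕ} {ψ β : List ℕ} (hψ : IsSeed n ψ)
    (hβ : tildeSeed n β = ψ ++ [mis n ψ]) : IsSeed n β := by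
  have hψ2 := hψ.two_le_length
  obtain ⟨hlen, hhead, hperm⟩ := hψ
  match β, hβ with
  | [], hβ => simp [tildeSeed] at hβ
  | a :: rest, hβ =>
    have hlenβ : (a :: rest).length = n - 1 := by
      have := congrArg List.length hβ
      simp [tildeSeed] at this
      simp only [List.length_cons]
      omega
    refine ⟨hlenβ, ?_, ?_⟩
    · have := congrArg List.head? hβ
      rw [List.head?_append, hhead] at this
      simpa [tildeSeed] using this
    · rw [IsPerm, seedToPerm_eq_tildeSeed n (by omega), hβ]
      have hψ0 : ψ ≠ [] := List.ne_nil_of_length_pos (by omega)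
      rw [seedToPerm_eq_tildeSeed n hψ2] at hperm
      exact (tildeSeed_perm_append_mis n hψ0).symm.trans hperm

/-- the first son of a hub seed is a hub seed of the same height. -/
theorem first_son_of_hub (n : ℕ) (hn : 5 ≤ n) (ψ : List ℕ) (hψ : IsSeed n ψ)
    (hhub : ψ ∈ Hub n) :
    ∃ β, IsSon n β ψ 1 ∧ β ∈ Hub n ∧ height n β = height n ψ := by
  obtain ⟨b, hb1, hb2, rfl⟩ := hhub
  have hβ : tildeSeed n (hubSeed n (opred n b)) = hubSeed n b ++ [mis n (hubSeed n b)] := by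
    rw [mis_hubSeed (by omega), tildeSeed_hubSeed_opred (by omega) hb1 hb2]
  refine ⟨hubSeed n (opred n b), ⟨hψ.of_tildeSeed_eq hβ, ?_⟩,
    ⟨opred n b, one_le_opred hb1 hb2, opred_le hb2, rfl⟩, ?_⟩
  · rw [Function.iterate_one, sig_seedShift_one hψ.1, hβ]
  · rw [height_hubSeed (one_le_opred hb1 hb2) (opred_le hb2), height_hubSeed hb1 hb2]
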